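/- Every optimal set of three-means for the condensation measure P equals {1/10, 1/2, 9/10} (that is, {S₁(1/2), 1/2, S₂(1/2)}), and the third quantization error of P is V_3(P) = 89/21900. -/

import Mathlib

open MeasureTheory Metric Set Filter

/-- The distortion error of a set `α` of quantizer points for `μ`, of order 2:
`∫ min_{a ∈ α} (x - a)^2 dμ(x)`. -/
noncomputable def distortion (μ : MeasureTheory.Measure ℝ) (α : Set ℝ) : ℝ :=
  ∫ x, (Metric.infDist x α) ^ 2 ∂μ

/-- The `n`th quantization error of order 2 for `μ`. -/
noncomputable def quantErr (μ : MeasureTheory.Measure ℝ) (n : ℕ) : ℝ :=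
  sInf {e : ℝ | ∃ α : Set ℝ, α.Finite ∧ α.Nonempty ∧ α.ncard ≤ n ∧ e = distortion μ α}

/-- `α` is an optimal set of `n`-means for `μ`. -/
def IsOptimalSet (μ : MeasureTheory.Measure ℝ) (n : ℕ) (α : Set ℝ) : Prop :=
  α.Finite ∧ α.Nonempty ∧ α.ncard ≤ n ∧ distortion μ α = quantErr μ n

/-- The similarity `S₁(x) = x/5`. -/
noncomputable def S1 : ℝ → ℝ := fun x => x / 5

/-- The similarity `S₂(x) = x/5 + 4/5`. -/
noncomputable def S2 : ℝ → ℝ := fun x => x / 5 + 4 / 5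

/-- `P` is the condensation measure associated with `(S₁, S₂; 1/3, 1/3, 1/3; ν)`:
`P = (1/3) P∘S₁⁻¹ + (1/3) P∘S₂⁻¹ + (1/3) ν`. -/
def IsCondensation (P ν : MeasureTheory.Measure ℝ) : Prop :=
  MeasureTheory.IsProbabilityMeasure P ∧
    P = (1 / 3 : ENNReal) • P.map S1 + (1 / 3 : ENNReal) • P.map S2 + (1 / 3 : ENNReal) • ν

/-- The uniform distribution on `[2/5, 3/5]`, i.e. the measure with density
`5 · 1_{[2/5, 3/5]}` with respect to Lebesgue measure. -/
noncomputable def nuUnif : MeasureTheory.Measure ℝ :=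
  (5 : ENNReal) • (MeasureTheory.volume.restrict (Set.Icc (2 / 5 : ℝ) (3 / 5)))

lemma contS1 : Continuous S1 := by unfold S1; continuity
lemma contS2 : Continuous S2 := by unfold S2; continuity

lemma support_ae (P : Measure ℝ) (hP : IsCondensation P nuUnif) :
    ∀ᵐ x ∂P, x ∈ Icc (0:ℝ) 1 := by
  obtain ⟨hprob, heq⟩ := hP
  rw [ae_iff]
  have hAmeas : MeasurableSet ((Icc (0:ℝ) 1)ᶜ) := (measurableSet_Icc).compl
  set t := P ((Icc (0:ℝ) 1)ᶜ) with ht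
  have h1 : P.map S1 ((Icc (0:ℝ) 1)ᶜ) ≤ t := by
    rw [Measure.map_apply contS1.measurable hAmeas]
    apply measure_mono
    intro x hx
    simp only [mem_preimage, mem_compl_iff, mem_Icc, S1] at hx ⊢
    intro hx2
    exact hx ⟨by linarith [hx2.1], by linarith [hx2.2]⟩
  have h2 : P.map S2 ((Icc (0:ℝ) 1)ᶜ) ≤ t := by
    rw [Measure.map_apply contS2.measurable hAmeas]
    apply measure_mono
    intro x hx
    simp only [mem_preimage, mem_compl_iff, mem_Icc, S2] at hx ⊢
    intro hx2
    exact hx ⟨by linarith [hx2.1], by linarith [hx2.2]⟩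
  have hnu : nuUnif ((Icc (0:ℝ) 1)ᶜ) = 0 := by
    rw [nuUnif]
    simp only [Measure.smul_apply, smul_eq_mul]
    rw [Measure.restrict_apply hAmeas]
    have : (Icc (0:ℝ) 1)ᶜ ∩ Icc (2/5 : ℝ) (3/5) = ∅ := by
      ext x; simp only [mem_inter_iff, mem_compl_iff, mem_Icc, mem_empty_iff_false, iff_false]
      rintro ⟨hx, hx2, hx3⟩
      exact hx ⟨by linarith, by linarith⟩
    rw [this]; simp
  have hkey : t ≤ 2/3 * t := by
    conv_lhs => rw [ht, heq]
    simp only [Measure.add_apply, Measure.smul_apply, smul_eq_mul, hnu]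
    calc 1/3 * P.map S1 ((Icc (0:ℝ) 1)ᶜ) + 1/3 * P.map S2 ((Icc (0:ℝ) 1)ᶜ) + 1/3 * 0
        ≤ 1/3 * t + 1/3 * t + 0 := by
          gcongr <;> simp
      _ = 2/3 * t := by
          rw [add_zero, ← add_mul]
          congr 1
          norm_num
          rw [ENNReal.div_eq_inv_mul]
          ring
  have htne : t ≠ ⊤ := by
    have := measure_lt_top P ((Icc (0:ℝ) 1)ᶜ)
    exact this.ne
  -- conclude t = 0
  by_contra hne
  have hpos : 0 < t := pos_iff_ne_zero.mpr hne
  have : (2/3 : ENNReal) * t < 1 * t := by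
    apply ENNReal.mul_lt_mul_left hne htne
    rw [ENNReal.div_lt_iff (by norm_num) (by norm_num)]
    · norm_num
  rw [one_mul] at this
  exact absurd hkey (not_le.2 this)

lemma integrable_P (P : Measure ℝ) (hP : IsCondensation P nuUnif) (f : ℝ → ℝ)
    (hf : Continuous f) : Integrable f P := by
  have : IsProbabilityMeasure P := hP.1
  obtain ⟨M, hM⟩ : ∃ M, ∀ x ∈ Icc (0:ℝ) 1, ‖f x‖ ≤ M :=
    isCompact_Icc.exists_bound_of_continuousOn hf.continuousOn
  refine ⟨hf.aestronglyMeasurable, ?_⟩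
  apply MeasureTheory.HasFiniteIntegral.of_bounded (C := M)
  filter_upwards [support_ae P hP] with x hx
  exact hM x hx

lemma integrable_nu (f : ℝ → ℝ) (hf : Continuous f) : Integrable f nuUnif := by
  rw [nuUnif]
  exact (hf.continuousOn.integrableOn_compact isCompact_Icc).smul_measure (by norm_num)

lemma int_eq (P : Measure ℝ) (hP : IsCondensation P nuUnif) (f : ℝ → ℝ) (hf : Continuous f) :
    ∫ x, f x ∂P = (1/3) * ((∫ x, f (S1 x) ∂P) + (∫ x, f (S2 x) ∂P)
      + 5 * ∫ x in Icc (2/5 : ℝ) (3/5), f x) := by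
  have hprob := hP.1
  have hi1 : Integrable f (P.map S1) := by
    rw [integrable_map_measure hf.aestronglyMeasurable contS1.measurable.aemeasurable]
    exact integrable_P P hP (f ∘ S1) (hf.comp contS1)
  have hi2 : Integrable f (P.map S2) := by
    rw [integrable_map_measure hf.aestronglyMeasurable contS2.measurable.aemeasurable]
    exact integrable_P P hP (f ∘ S2) (hf.comp contS2)
  have hinu : Integrable f nuUnif := integrable_nu f hf
  have h13 : (1/3 : ENNReal) ≠ ⊤ := by norm_num
  conv_lhs => rw [hP.2]
  rw [integral_add_measure (μ := (1/3 : ENNReal) • P.map S1 + (1/3 : ENNReal) • P.map S2)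
    (ν := (1/3 : ENNReal) • nuUnif)
    ((hi1.smul_measure h13).add_measure (hi2.smul_measure h13)) (hinu.smul_measure h13),
    integral_add_measure (hi1.smul_measure h13) (hi2.smul_measure h13)]
  rw [integral_smul_measure, integral_smul_measure, integral_smul_measure]
  rw [integral_map contS1.measurable.aemeasurable hf.aestronglyMeasurable,
    integral_map contS2.measurable.aemeasurable hf.aestronglyMeasurable]
  have hnu : ∫ x, f x ∂nuUnif = 5 * ∫ x in Icc (2/5 : ℝ) (3/5), f x := by
    rw [nuUnif, integral_smul_measure]
    norm_num
  rw [hnu]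
  have : ((1:ENNReal)/3).toReal = 1/3 := by
    rw [ENNReal.toReal_div]; norm_num
  rw [this]
  simp only [smul_eq_mul]
  ring

lemma icc_eq (f : ℝ → ℝ) (a b : ℝ) (h : a ≤ b) :
    ∫ x in Icc a b, f x = ∫ x in a..b, f x := by
  rw [integral_Icc_eq_integral_Ioc, intervalIntegral.integral_of_le h]

lemma ii_sq (c a b : ℝ) : ∫ x in a..b, (x - c)^2 = ((b-c)^3 - (a-c)^3)/3 := by
  have h : ∀ x ∈ uIcc a b, HasDerivAt (fun y => (y-c)^3/3) ((x-c)^2) x := by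
    intro x _
    have h1 : HasDerivAt (fun y : ℝ => (y - c)^3) (3*(x-c)^2 * 1) x :=
      (((hasDerivAt_id x).sub_const c).pow 3).congr_deriv (by simp only [id_eq]; ring)
    have := h1.div_const 3
    exact this.congr_deriv (by ring)
  rw [intervalIntegral.integral_eq_sub_of_hasDerivAt h
    (((continuous_id.sub continuous_const).pow 2).intervalIntegrable a b)]
  ring

lemma m0P (P : Measure ℝ) (hP : IsCondensation P nuUnif) : ∫ x, x ∂P = 1/2 := by
  have hprob := hP.1
  have h := int_eq P hP (fun x => x) continuous_id
  have h1 : ∫ x, S1 x ∂P = (1/5) * ∫ x, x ∂P := by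
    simp only [S1]
    rw [← MeasureTheory.integral_const_mul]
    congr 1; funext x; ring
  have h2 : ∫ x, S2 x ∂P = (1/5) * (∫ x, x ∂P) + 4/5 := by
    simp only [S2]
    rw [integral_add (integrable_P P hP (fun x => x/5) (by fun_prop))
      (integrable_const _), integral_const]
    simp only [probReal_univ, one_smul]
    have h5 : ∫ x, x/5 ∂P = 1/5 * ∫ x, x ∂P := by
      rw [← MeasureTheory.integral_const_mul]
      congr 1; funext x; ring
    rw [h5]
  have h3 : ∫ x in Icc (2/5:ℝ) (3/5), x = 1/10 := by
    rw [icc_eq _ _ _ (by norm_num), integral_id]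
    norm_num
  simp only [S1, S2] at h
  simp only [S1] at h1
  simp only [S2] at h2
  rw [h1, h2, h3] at h
  linarith

lemma m2P (P : Measure ℝ) (hP : IsCondensation P nuUnif) : ∫ x, x^2 ∂P = 79/219 := by
  have hprob := hP.1
  have h := int_eq P hP (fun x => x^2) (by fun_prop)
  have hm0 := m0P P hP
  have h1 : ∫ x, (S1 x)^2 ∂P = (1/25) * ∫ x, x^2 ∂P := by
    simp only [S1]
    rw [← MeasureTheory.integral_const_mul]
    congr 1; funext x; ring
  have h2 : ∫ x, (S2 x)^2 ∂P = (1/25) * (∫ x, x^2 ∂P) + (8/25) * (∫ x, x ∂P) + 16/25 := by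
    simp only [S2]
    have e : (fun x : ℝ => (x/5 + 4/5)^2) = fun x => (1/25) * x^2 + ((8/25) * x + 16/25) := by
      funext x; ring
    rw [e, integral_add (by
        exact (integrable_P P hP (fun x => x^2) (by fun_prop)).const_mul _)
      (by
        apply Integrable.add
        · exact (integrable_P P hP (fun x => x) continuous_id).const_mul _
        · exact integrable_const _),
      integral_add ((integrable_P P hP (fun x => x) continuous_id).const_mul _)
        (integrable_const _),
      MeasureTheory.integral_const_mul, MeasureTheory.integral_const_mul, integral_const]
    simp only [probReal_univ, one_smul]
    ring
  have h3 : ∫ x in Icc (2/5:ℝ) (3/5), x^2 = 19/375 := by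
    rw [icc_eq _ _ _ (by norm_num)]
    have := ii_sq 0 (2/5) (3/5)
    simp only [sub_zero] at this
    rw [this]
    norm_num
  simp only [S1, S2] at h h1 h2
  rw [h1, h2, h3, hm0] at h
  linarith

lemma momP (P : Measure ℝ) (hP : IsCondensation P nuUnif) (t : ℝ) :
    ∫ x, (x - t)^2 ∂P = 97/876 + (1/2 - t)^2 := by
  have hprob := hP.1
  have e : (fun x : ℝ => (x - t)^2) = fun x => x^2 + ((-2*t) * x + t^2) := by
    funext x; ring
  rw [e, integral_add (integrable_P P hP (fun x => x^2) (by fun_prop))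
      (by
        apply Integrable.add
        · exact (integrable_P P hP (fun x => x) continuous_id).const_mul _
        · exact integrable_const _),
    integral_add ((integrable_P P hP (fun x => x) continuous_id).const_mul _)
      (integrable_const _),
    MeasureTheory.integral_const_mul, integral_const]
  simp only [probReal_univ, one_smul]
  rw [m2P P hP, m0P P hP]
  ring

lemma momS1 (P : Measure ℝ) (hP : IsCondensation P nuUnif) (a : ℝ) :
    ∫ x, (S1 x - a)^2 ∂P = 97/21900 + (a - 1/10)^2 := by
  have e : (fun x : ℝ => (S1 x - a)^2) = fun x => (1/25) * (x - 5*a)^2 := by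
    funext x; simp only [S1]; ring
  rw [e, MeasureTheory.integral_const_mul, momP P hP]
  ring

lemma momS2 (P : Measure ℝ) (hP : IsCondensation P nuUnif) (c : ℝ) :
    ∫ x, (S2 x - c)^2 ∂P = 97/21900 + (c - 9/10)^2 := by
  have e : (fun x : ℝ => (S2 x - c)^2) = fun x => (1/25) * (x - (5*c - 4))^2 := by
    funext x; simp only [S2]; ring
  rw [e, MeasureTheory.integral_const_mul, momP P hP]
  ring

lemma le_infDist' {s : Set ℝ} (hs : s.Nonempty) {x b : ℝ} (h : ∀ y ∈ s, b ≤ |x - y|) :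
    b ≤ infDist x s := by
  refine le_of_not_gt fun hlt => ?_
  rcases (infDist_lt_iff hs).1 hlt with ⟨y, hy, hd⟩
  rw [Real.dist_eq] at hd
  exact absurd (h y hy) (not_le.2 hd)

lemma infDist_sq_le {s : Set ℝ} {x a : ℝ} (h : a ∈ s) : infDist x s ^ 2 ≤ (x - a)^2 := by
  have h1 : infDist x s ≤ |x - a| := by
    simpa [Real.dist_eq] using infDist_le_dist_of_mem h
  calc infDist x s ^ 2 ≤ |x - a| ^ 2 := by
        apply pow_le_pow_left₀ infDist_nonneg h1
    _ = (x - a)^2 := sq_abs _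

lemma infDist_sq_ge {s : Set ℝ} (hs : s.Nonempty) {x t : ℝ} (ht : 0 ≤ t)
    (h : ∀ y ∈ s, t ≤ |x - y|) : t^2 ≤ infDist x s ^ 2 :=
  pow_le_pow_left₀ ht (le_infDist' hs h) 2

lemma infDist_sq_eq {s : Set ℝ} {x a : ℝ} (h : a ∈ s) (hmin : ∀ y ∈ s, |x - a| ≤ |x - y|) :
    infDist x s ^ 2 = (x - a)^2 := by
  refine le_antisymm (infDist_sq_le h) ?_
  calc (x-a)^2 = |x - a|^2 := (sq_abs _).symm
    _ ≤ infDist x s ^ 2 := pow_le_pow_left₀ (abs_nonneg _) (le_infDist' ⟨a, h⟩ hmin) 2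

lemma abs_le_abs_of_sq (u v : ℝ) (h : u^2 ≤ v^2) : |u| ≤ |v| := by
  by_contra h'
  push_neg at h'
  nlinarith [abs_nonneg v, abs_nonneg u, sq_abs u, sq_abs v]

lemma distortion_target (P : Measure ℝ) (hP : IsCondensation P nuUnif) :
    distortion P ({1/10, 1/2, 9/10} : Set ℝ) = 89/21900 := by
  have hcont : Continuous (fun x : ℝ => infDist x ({1/10, 1/2, 9/10} : Set ℝ) ^ 2) :=
    (continuous_infDist_pt _).pow 2
  rw [distortion, int_eq P hP _ hcont]
  have hA : ∫ x, infDist (S1 x) ({1/10, 1/2, 9/10} : Set ℝ) ^ 2 ∂P = 97/21900 := by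
    have he : ∫ x, infDist (S1 x) ({1/10, 1/2, 9/10} : Set ℝ) ^ 2 ∂P
        = ∫ x, (S1 x - 1/10)^2 ∂P := by
      apply integral_congr_ae
      filter_upwards [support_ae P hP] with x hx
      rw [mem_Icc] at hx
      apply infDist_sq_eq (by norm_num)
      rintro y (rfl | rfl | rfl) <;>
      · apply abs_le_abs_of_sq
        simp only [S1]
        nlinarith [hx.1, hx.2]
    rw [he, momS1 P hP]
    norm_num
  have hC : ∫ x, infDist (S2 x) ({1/10, 1/2, 9/10} : Set ℝ) ^ 2 ∂P = 97/21900 := by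
    have he : ∫ x, infDist (S2 x) ({1/10, 1/2, 9/10} : Set ℝ) ^ 2 ∂P
        = ∫ x, (S2 x - 9/10)^2 ∂P := by
      apply integral_congr_ae
      filter_upwards [support_ae P hP] with x hx
      rw [mem_Icc] at hx
      apply infDist_sq_eq (by norm_num)
      rintro y (rfl | rfl | rfl) <;>
      · apply abs_le_abs_of_sq
        simp only [S2]
        nlinarith [hx.1, hx.2]
    rw [he, momS2 P hP]
    norm_num
  have hB : ∫ x in Icc (2/5:ℝ) (3/5), infDist x ({1/10, 1/2, 9/10} : Set ℝ) ^ 2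
      = 1/1500 := by
    have he : ∫ x in Icc (2/5:ℝ) (3/5), infDist x ({1/10, 1/2, 9/10} : Set ℝ) ^ 2
        = ∫ x in Icc (2/5:ℝ) (3/5), (x - 1/2)^2 := by
      apply setIntegral_congr_fun measurableSet_Icc
      intro x hx
      rw [mem_Icc] at hx
      apply infDist_sq_eq (by norm_num)
      rintro y (rfl | rfl | rfl) <;>
      · apply abs_le_abs_of_sq
        nlinarith [hx.1, hx.2]
    rw [he, icc_eq _ _ _ (by norm_num), ii_sq]
    norm_num
  rw [hA, hB, hC]
  norm_num

noncomputable def Nfun (b w : ℝ) : ℝ := 5 * ∫ x in Icc (2/5:ℝ) (3/5), min ((x-b)^2) (w^2)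

lemma contMin (b w : ℝ) : Continuous (fun x : ℝ => min ((x-b)^2) (w^2)) := by fun_prop

lemma Neval1 (b : ℝ) (h1 : 2/5 ≤ b) (h2 : b ≤ 1/2) :
    Nfun b (1/10) = (5/3)*((1/10)^3 + (b-2/5)^3) + 5*(1/2-b)/100 := by
  rw [Nfun, icc_eq _ _ _ (by norm_num)]
  have hsplit := intervalIntegral.integral_add_adjacent_intervals
    (a := 2/5) (b := b + 1/10) (c := 3/5) (μ := volume)
    ((contMin b (1/10)).intervalIntegrable _ _) ((contMin b (1/10)).intervalIntegrable _ _)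
  rw [← hsplit]
  have e1 : ∫ x in (2/5:ℝ)..(b+1/10), min ((x-b)^2) ((1/10:ℝ)^2)
      = ∫ x in (2/5:ℝ)..(b+1/10), (x-b)^2 := by
    apply intervalIntegral.integral_congr
    intro x hx
    rw [uIcc_of_le (by linarith), mem_Icc] at hx
    exact min_eq_left (by nlinarith [hx.1, hx.2])
  have e2 : ∫ x in (b+1/10:ℝ)..(3/5), min ((x-b)^2) ((1/10:ℝ)^2)
      = ∫ x in (b+1/10:ℝ)..(3/5), ((1/10:ℝ)^2) := by
    apply intervalIntegral.integral_congr
    intro x hx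
    rw [uIcc_of_le (by linarith), mem_Icc] at hx
    exact min_eq_right (by nlinarith [hx.1, hx.2])
  rw [e1, e2, ii_sq, intervalIntegral.integral_const]
  simp only [smul_eq_mul]
  ring

lemma Neval2 (b : ℝ) (h1 : 1/2 ≤ b) (h2 : b ≤ 3/5) :
    Nfun b (1/10) = 5*(b - 1/2)/100 + (5/3)*((3/5-b)^3 + (1/10)^3) := by
  rw [Nfun, icc_eq _ _ _ (by norm_num)]
  have hsplit := intervalIntegral.integral_add_adjacent_intervals
    (a := 2/5) (b := b - 1/10) (c := 3/5) (μ := volume)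
    ((contMin b (1/10)).intervalIntegrable _ _) ((contMin b (1/10)).intervalIntegrable _ _)
  rw [← hsplit]
  have e1 : ∫ x in (2/5:ℝ)..(b-1/10), min ((x-b)^2) ((1/10:ℝ)^2)
      = ∫ x in (2/5:ℝ)..(b-1/10), ((1/10:ℝ)^2) := by
    apply intervalIntegral.integral_congr
    intro x hx
    rw [uIcc_of_le (by linarith), mem_Icc] at hx
    exact min_eq_right (by nlinarith [hx.1, hx.2])
  have e2 : ∫ x in (b-1/10:ℝ)..(3/5), min ((x-b)^2) ((1/10:ℝ)^2)
      = ∫ x in (b-1/10:ℝ)..(3/5), (x-b)^2 := by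
    apply intervalIntegral.integral_congr
    intro x hx
    rw [uIcc_of_le (by linarith), mem_Icc] at hx
    exact min_eq_left (by nlinarith [hx.1, hx.2])
  rw [e1, e2, ii_sq, intervalIntegral.integral_const]
  simp only [smul_eq_mul]
  ring

lemma Nmono_left (b w : ℝ) (hb : b ≤ 2/5) : Nfun (2/5) w ≤ Nfun b w := by
  rw [Nfun, Nfun]
  have : ∫ x in Icc (2/5:ℝ) (3/5), min ((x-2/5)^2) (w^2)
      ≤ ∫ x in Icc (2/5:ℝ) (3/5), min ((x-b)^2) (w^2) := by
    apply setIntegral_mono_on ((contMin _ w).continuousOn.integrableOn_compact isCompact_Icc)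
      ((contMin b w).continuousOn.integrableOn_compact isCompact_Icc) measurableSet_Icc
    intro x hx
    rw [mem_Icc] at hx
    exact min_le_min (by nlinarith [hx.1, hx.2]) le_rfl
  linarith

lemma Nmono_right (b w : ℝ) (hb : 3/5 ≤ b) : Nfun (3/5) w ≤ Nfun b w := by
  rw [Nfun, Nfun]
  have : ∫ x in Icc (2/5:ℝ) (3/5), min ((x-3/5)^2) (w^2)
      ≤ ∫ x in Icc (2/5:ℝ) (3/5), min ((x-b)^2) (w^2) := by
    apply setIntegral_mono_on ((contMin _ w).continuousOn.integrableOn_compact isCompact_Icc)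
      ((contMin b w).continuousOn.integrableOn_compact isCompact_Icc) measurableSet_Icc
    intro x hx
    rw [mem_Icc] at hx
    exact min_le_min (by nlinarith [hx.1, hx.2]) le_rfl
  linarith

lemma Nmono_w (b : ℝ) {w w' : ℝ} (h0 : 0 ≤ w') (h : w' ≤ w) : Nfun b w' ≤ Nfun b w := by
  rw [Nfun, Nfun]
  have : ∫ x in Icc (2/5:ℝ) (3/5), min ((x-b)^2) (w'^2)
      ≤ ∫ x in Icc (2/5:ℝ) (3/5), min ((x-b)^2) (w^2) := by
    apply setIntegral_mono_on ((contMin b w').continuousOn.integrableOn_compact isCompact_Icc)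
      ((contMin b w).continuousOn.integrableOn_compact isCompact_Icc) measurableSet_Icc
    intro x _
    exact min_le_min le_rfl (by nlinarith)
  linarith

lemma subS (b : ℝ) : 1/300 ≤ Nfun b (1/10) ∧ (Nfun b (1/10) ≤ 1/300 → b = 1/2) := by
  rcases le_or_gt b (2/5) with hb | hb
  · have h := Nmono_left b (1/10) hb
    have hval : Nfun (2/5) (1/10) = 1/150 := by
      rw [Neval1 (2/5) le_rfl (by norm_num)]; norm_num
    constructor
    · rw [hval] at h; linarith
    · intro hle; rw [hval] at h; linarith
  · rcases le_or_gt b (1/2) with hb2 | hb2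
    · rw [Neval1 b (le_of_lt hb) hb2]
      constructor
      · nlinarith [sq_nonneg (1/2 - b)]
      · intro hle
        have h1 : (1/2 - b)^2 * (1/2 - 5*(1/2-b)/3) ≤ 0 := by nlinarith
        have h2 : (1/3 : ℝ) ≤ 1/2 - 5*(1/2-b)/3 := by linarith
        nlinarith [sq_nonneg (1/2 - b)]
    · rcases le_or_gt b (3/5) with hb3 | hb3
      · rw [Neval2 b (le_of_lt hb2) hb3]
        constructor
        · nlinarith [sq_nonneg (b - 1/2)]
        · intro hle
          have h1 : (b - 1/2)^2 * (1/2 - 5*(b-1/2)/3) ≤ 0 := by nlinarith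
          have h2 : (1/3 : ℝ) ≤ 1/2 - 5*(b-1/2)/3 := by linarith
          nlinarith [sq_nonneg (b - 1/2)]
      · have h := Nmono_right b (1/10) (le_of_lt hb3)
        have hval : Nfun (3/5) (1/10) = 1/150 := by
          rw [Neval2 (3/5) (by norm_num) le_rfl]; norm_num
        constructor
        · rw [hval] at h; linarith
        · intro hle; rw [hval] at h; linarith

lemma key (u v b : ℝ) (hu : 0 < u) (hu2 : u ≤ 2/5) (hv : 0 < v) (hv2 : v ≤ 2/5) :
    1/300 ≤ (3/10-u)^2 + (3/10-v)^2 + Nfun b (min u v) ∧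
    ((3/10-u)^2 + (3/10-v)^2 + Nfun b (min u v) ≤ 1/300 →
      u = 3/10 ∧ v = 3/10 ∧ b = 1/2) := by
  have hNpos : 0 ≤ Nfun b (min u v) := by
    rw [Nfun]
    have : 0 ≤ ∫ x in Icc (2/5:ℝ) (3/5), min ((x-b)^2) ((min u v)^2) :=
      setIntegral_nonneg measurableSet_Icc fun x _ => le_min (sq_nonneg _) (sq_nonneg _)
    linarith
  rcases lt_or_ge (min u v) (1/10) with h | h
  · have hsq : 1/25 ≤ (3/10-u)^2 ∨ 1/25 ≤ (3/10-v)^2 := by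
      rcases min_lt_iff.mp h with h' | h'
      · left; nlinarith
      · right; nlinarith
    constructor
    · rcases hsq with h' | h' <;> nlinarith [sq_nonneg (3/10-u), sq_nonneg (3/10-v)]
    · intro habs
      exfalso
      rcases hsq with h' | h' <;> nlinarith [sq_nonneg (3/10-u), sq_nonneg (3/10-v)]
  · have hm := Nmono_w b (by norm_num : (0:ℝ) ≤ 1/10) h
    have hS := subS b
    constructor
    · nlinarith [sq_nonneg (3/10-u), sq_nonneg (3/10-v), hS.1]
    · intro hle
      have hu3 : u = 3/10 := by nlinarith [sq_nonneg (3/10-u), sq_nonneg (3/10-v), hS.1]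
      have hv3 : v = 3/10 := by nlinarith [sq_nonneg (3/10-u), sq_nonneg (3/10-v), hS.1]
      refine ⟨hu3, hv3, hS.2 ?_⟩
      nlinarith [sq_nonneg (3/10-u), sq_nonneg (3/10-v)]

lemma infDist_sq_ge_abs {s : Set ℝ} (hs : s.Nonempty) {x a : ℝ}
    (h : ∀ y ∈ s, |x - a| ≤ |x - y|) : (x - a)^2 ≤ infDist x s ^ 2 := by
  rw [← sq_abs (x - a)]
  exact pow_le_pow_left₀ (abs_nonneg _) (le_infDist' hs h) 2

lemma min_sq_eq (p q : ℝ) (hp : 0 ≤ p) (hq : 0 ≤ q) : min (p^2) (q^2) = (min p q)^2 := by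
  rcases le_total p q with h | h
  · rw [min_eq_left (by nlinarith), min_eq_left h]
  · rw [min_eq_right (by nlinarith), min_eq_right h]

lemma midMinEval : (5:ℝ) * ∫ x in Icc (2/5:ℝ) (3/5), min ((x-2/5)^2) ((x-3/5)^2) = 1/300 := by
  have hc : Continuous (fun x : ℝ => min ((x-2/5)^2) ((x-3/5)^2)) := by fun_prop
  rw [icc_eq _ _ _ (by norm_num)]
  have hsplit := intervalIntegral.integral_add_adjacent_intervals
    (a := 2/5) (b := 1/2) (c := 3/5) (μ := volume) (f := fun x => min ((x-2/5)^2) ((x-3/5)^2))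
    (hc.intervalIntegrable _ _) (hc.intervalIntegrable _ _)
  rw [← hsplit]
  have e1 : ∫ x in (2/5:ℝ)..(1/2), min ((x-2/5)^2) ((x-3/5)^2)
      = ∫ x in (2/5:ℝ)..(1/2), (x-2/5)^2 := by
    apply intervalIntegral.integral_congr
    intro x hx
    rw [uIcc_of_le (by norm_num), mem_Icc] at hx
    exact min_eq_left (by nlinarith [hx.1, hx.2])
  have e2 : ∫ x in (1/2:ℝ)..(3/5), min ((x-2/5)^2) ((x-3/5)^2)
      = ∫ x in (1/2:ℝ)..(3/5), (x-3/5)^2 := by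
    apply intervalIntegral.integral_congr
    intro x hx
    rw [uIcc_of_le (by norm_num), mem_Icc] at hx
    exact min_eq_right (by nlinarith [hx.1, hx.2])
  rw [e1, e2, ii_sq, ii_sq]
  norm_num

lemma sqIcc_eval1 : (5:ℝ) * ∫ x in Icc (2/5:ℝ) (3/5), (x-2/5)^2 = 1/75 := by
  rw [icc_eq _ _ _ (by norm_num), ii_sq]; norm_num

lemma sqIcc_eval2 : (5:ℝ) * ∫ x in Icc (2/5:ℝ) (3/5), (x-3/5)^2 = 1/75 := by
  rw [icc_eq _ _ _ (by norm_num), ii_sq]; norm_num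

set_option maxHeartbeats 2000000 in
lemma main_bound (P : Measure ℝ) (hP : IsCondensation P nuUnif) (α : Set ℝ)
    (hfin : α.Finite) (hne : α.Nonempty) (hcard : α.ncard ≤ 3) :
    89/21900 ≤ distortion P α ∧
      (distortion P α ≤ 89/21900 → α = ({1/10, 1/2, 9/10} : Set ℝ)) := by
  have hprob := hP.1
  have hcont : Continuous (fun x : ℝ => infDist x α ^ 2) := (continuous_infDist_pt α).pow 2
  have hFeq : distortion P α = 1/3 * ((∫ x, infDist (S1 x) α ^ 2 ∂P)
      + (∫ x, infDist (S2 x) α ^ 2 ∂P)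
      + 5 * ∫ x in Icc (2/5:ℝ) (3/5), infDist x α ^ 2) := by
    rw [distortion]
    exact int_eq P hP _ hcont
  have hA0 : 0 ≤ ∫ x, infDist (S1 x) α ^ 2 ∂P := integral_nonneg fun x => sq_nonneg _
  have hC0 : 0 ≤ ∫ x, infDist (S2 x) α ^ 2 ∂P := integral_nonneg fun x => sq_nonneg _
  have hB0 : 0 ≤ ∫ x in Icc (2/5:ℝ) (3/5), infDist x α ^ 2 :=
    setIntegral_nonneg measurableSet_Icc fun x _ => sq_nonneg _
  have hAmono : ∀ g : ℝ → ℝ, Continuous g → (∀ x ∈ Icc (0:ℝ) 1, g x ≤ infDist (S1 x) α ^ 2) →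
      ∫ x, g x ∂P ≤ ∫ x, infDist (S1 x) α ^ 2 ∂P := by
    intro g hg hle
    apply integral_mono_ae (integrable_P P hP g hg)
      (integrable_P P hP _ (hcont.comp contS1))
    filter_upwards [support_ae P hP] with x hx using hle x hx
  have hCmono : ∀ g : ℝ → ℝ, Continuous g → (∀ x ∈ Icc (0:ℝ) 1, g x ≤ infDist (S2 x) α ^ 2) →
      ∫ x, g x ∂P ≤ ∫ x, infDist (S2 x) α ^ 2 ∂P := by
    intro g hg hle
    apply integral_mono_ae (integrable_P P hP g hg)
      (integrable_P P hP _ (hcont.comp contS2))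
    filter_upwards [support_ae P hP] with x hx using hle x hx
  have hBmono : ∀ g : ℝ → ℝ, Continuous g → (∀ x ∈ Icc (2/5:ℝ) (3/5), g x ≤ infDist x α ^ 2) →
      ∫ x in Icc (2/5:ℝ) (3/5), g x ≤ ∫ x in Icc (2/5:ℝ) (3/5), infDist x α ^ 2 := by
    intro g hg hle
    exact setIntegral_mono_on (hg.continuousOn.integrableOn_compact isCompact_Icc)
      (hcont.continuousOn.integrableOn_compact isCompact_Icc) measurableSet_Icc hle
  -- case I : no point near [0, 1/5]
  by_cases hN1 : (α ∩ Ioo (-(1:ℝ)/5) (2/5)).Nonempty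
  swap
  · have hA : 1/25 ≤ ∫ x, infDist (S1 x) α ^ 2 ∂P := by
      have := hAmono (fun _ => 1/25) continuous_const ?_
      · rwa [integral_const, probReal_univ, one_smul] at this
      · intro x hx
        rw [mem_Icc] at hx
        have h15 : ((1:ℝ)/5)^2 = 1/25 := by norm_num
        rw [← h15]
        apply infDist_sq_ge hne (by norm_num)
        intro y hy
        have hyn : y ∉ Ioo (-(1:ℝ)/5) (2/5) := fun hmem => hN1 ⟨y, hy, hmem⟩
        rw [mem_Ioo, not_and_or, not_lt, not_lt] at hyn
        simp only [S1]
        rcases hyn with h | h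
        · exact le_abs.mpr (Or.inl (by linarith [hx.1]))
        · exact le_abs.mpr (Or.inr (by linarith [hx.2]))
    constructor
    · rw [hFeq]; linarith
    · intro hle; exfalso; rw [hFeq] at hle; linarith
  -- case III : no point near [4/5, 1]
  by_cases hN3 : (α ∩ Ioo (3/5 : ℝ) (6/5)).Nonempty
  swap
  · have hC : 1/25 ≤ ∫ x, infDist (S2 x) α ^ 2 ∂P := by
      have := hCmono (fun _ => 1/25) continuous_const ?_
      · rwa [integral_const, probReal_univ, one_smul] at this
      · intro x hx
        rw [mem_Icc] at hx
        have h15 : ((1:ℝ)/5)^2 = 1/25 := by norm_num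
        rw [← h15]
        apply infDist_sq_ge hne (by norm_num)
        intro y hy
        have hyn : y ∉ Ioo (3/5 : ℝ) (6/5) := fun hmem => hN3 ⟨y, hy, hmem⟩
        rw [mem_Ioo, not_and_or, not_lt, not_lt] at hyn
        simp only [S2]
        rcases hyn with h | h
        · exact le_abs.mpr (Or.inl (by linarith [hx.1]))
        · exact le_abs.mpr (Or.inr (by linarith [hx.2]))
    constructor
    · rw [hFeq]; linarith
    · intro hle; exfalso; rw [hFeq] at hle; linarith
  by_cases hMid : (α ∩ Icc (2/5 : ℝ) (3/5)).Nonempty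
  · -- main case
    obtain ⟨a, ha, ha1, ha2⟩ : ∃ a ∈ α, -(1:ℝ)/5 < a ∧ a < 2/5 := by
      obtain ⟨a, ha, hmem⟩ := hN1; exact ⟨a, ha, hmem.1, hmem.2⟩
    obtain ⟨c, hc, hc1, hc2⟩ : ∃ c ∈ α, (3:ℝ)/5 < c ∧ c < 6/5 := by
      obtain ⟨c, hc, hmem⟩ := hN3; exact ⟨c, hc, hmem.1, hmem.2⟩
    obtain ⟨b, hb, hb1, hb2⟩ : ∃ b ∈ α, (2:ℝ)/5 ≤ b ∧ b ≤ 3/5 := by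
      obtain ⟨b, hb, hmem⟩ := hMid; exact ⟨b, hb, hmem.1, hmem.2⟩
    have hab : a ≠ b := by intro h; rw [h] at ha2; linarith
    have hbc : b ≠ c := by intro h; rw [h] at hb2; linarith
    have hac : a ≠ c := by intro h; rw [h] at ha2; linarith
    have hsub : ({a, b, c} : Set ℝ) ⊆ α := by
      intro y hy
      rcases hy with rfl | rfl | rfl
      exacts [ha, hb, hc]
    have htriple : ({a, b, c} : Set ℝ).ncard = 3 :=
      Set.ncard_eq_three.mpr ⟨a, b, c, hab, hac, hbc, rfl⟩
    have hαeq : α = ({a, b, c} : Set ℝ) := by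
      symm
      apply Set.eq_of_subset_of_ncard_le hsub _ hfin
      rw [htriple]; exact hcard
    have hmem3 : ∀ y, y ∈ α → y = a ∨ y = b ∨ y = c := by
      intro y hy
      rw [hαeq] at hy
      simpa [mem_insert_iff, mem_singleton_iff] using hy
    by_cases ha0 : a < 0
    · -- a < 0
      have hA : 316/21900 ≤ ∫ x, infDist (S1 x) α ^ 2 ∂P := by
        have hm := hAmono (fun x => (S1 x - 0)^2) (by unfold S1; fun_prop) ?_
        · have := momS1 P hP 0
          rw [this] at hm
          norm_num at hm ⊢
          linarith
        · intro x hx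
          rw [mem_Icc] at hx
          show (S1 x - 0)^2 ≤ infDist (S1 x) α ^ 2
          have h1 : (S1 x - 0)^2 = (S1 x)^2 := by ring
          rw [h1]
          apply infDist_sq_ge hne (by simp only [S1]; linarith [hx.1])
          intro y hy
          rcases hmem3 y hy with h | h | h <;> rw [h] <;> simp only [S1]
          · exact le_abs.mpr (Or.inl (by linarith))
          · exact le_abs.mpr (Or.inr (by linarith [hx.2]))
          · exact le_abs.mpr (Or.inr (by linarith [hx.2]))
      constructor
      · rw [hFeq]; linarith
      · intro hle; exfalso; rw [hFeq] at hle; linarith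
    by_cases hc0 : 1 < c
    · -- c > 1
      have hC : 316/21900 ≤ ∫ x, infDist (S2 x) α ^ 2 ∂P := by
        have hm := hCmono (fun x => (S2 x - 1)^2) (by unfold S2; fun_prop) ?_
        · have := momS2 P hP 1
          rw [this] at hm
          norm_num at hm ⊢
          linarith
        · intro x hx
          rw [mem_Icc] at hx
          show (S2 x - 1)^2 ≤ infDist (S2 x) α ^ 2
          have h1 : (S2 x - 1)^2 = (1 - S2 x)^2 := by ring
          rw [h1]
          apply infDist_sq_ge hne (by simp only [S2]; linarith [hx.2])
          intro y hy
          rcases hmem3 y hy with h | h | h <;> rw [h] <;> simp only [S2]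
          · exact le_abs.mpr (Or.inl (by linarith [hx.1]))
          · exact le_abs.mpr (Or.inl (by linarith [hx.1]))
          · exact le_abs.mpr (Or.inr (by linarith))
      constructor
      · rw [hFeq]; linarith
      · intro hle; exfalso; rw [hFeq] at hle; linarith
    · -- main subcase : 0 ≤ a < 2/5, 2/5 ≤ b ≤ 3/5, 3/5 < c ≤ 1
      push_neg at ha0 hc0
      have hAex : ∫ x, infDist (S1 x) α ^ 2 ∂P = 97/21900 + (a - 1/10)^2 := by
        have he : ∫ x, infDist (S1 x) α ^ 2 ∂P = ∫ x, (S1 x - a)^2 ∂P := by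
          apply integral_congr_ae
          filter_upwards [support_ae P hP] with x hx
          rw [mem_Icc] at hx
          apply infDist_sq_eq ha
          intro y hy
          rcases hmem3 y hy with h | h | h <;> rw [h]
          · apply abs_le_abs_of_sq
            simp only [S1]
            nlinarith [mul_nonneg (by linarith : (0:ℝ) ≤ b - a)
              (by linarith [hx.2] : (0:ℝ) ≤ a + b - 2*(x/5))]
          · apply abs_le_abs_of_sq
            simp only [S1]
            nlinarith [mul_nonneg (by linarith : (0:ℝ) ≤ c - a)
              (by linarith [hx.2] : (0:ℝ) ≤ a + c - 2*(x/5))]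
        rw [he, momS1 P hP]
      have hCex : ∫ x, infDist (S2 x) α ^ 2 ∂P = 97/21900 + (c - 9/10)^2 := by
        have he : ∫ x, infDist (S2 x) α ^ 2 ∂P = ∫ x, (S2 x - c)^2 ∂P := by
          apply integral_congr_ae
          filter_upwards [support_ae P hP] with x hx
          rw [mem_Icc] at hx
          apply infDist_sq_eq hc
          intro y hy
          rcases hmem3 y hy with h | h | h <;> rw [h]
          · apply abs_le_abs_of_sq
            simp only [S2]
            nlinarith [mul_nonneg (by linarith : (0:ℝ) ≤ c - a)
              (by linarith [hx.1] : (0:ℝ) ≤ 2*(x/5 + 4/5) - a - c)]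
          · apply abs_le_abs_of_sq
            simp only [S2]
            nlinarith [mul_nonneg (by linarith : (0:ℝ) ≤ c - b)
              (by linarith [hx.1] : (0:ℝ) ≤ 2*(x/5 + 4/5) - b - c)]
        rw [he, momS2 P hP]
      have hw0 : (0:ℝ) < min (2/5 - a) (c - 3/5) := lt_min (by linarith) (by linarith)
      have hBge : Nfun b (min (2/5 - a) (c - 3/5))
          ≤ 5 * ∫ x in Icc (2/5:ℝ) (3/5), infDist x α ^ 2 := by
        rw [Nfun]
        have hm := hBmono (fun x => min ((x-b)^2) ((min (2/5 - a) (c - 3/5))^2))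
          (by fun_prop) ?_
        · linarith
        · intro x hx
          rw [mem_Icc] at hx
          show min ((x-b)^2) ((min (2/5 - a) (c - 3/5))^2) ≤ infDist x α ^ 2
          have he1 : min ((x-b)^2) ((min (2/5 - a) (c - 3/5))^2)
              = (min |x-b| (min (2/5 - a) (c - 3/5)))^2 := by
            rw [← sq_abs (x-b)]
            exact min_sq_eq _ _ (abs_nonneg _) (le_of_lt hw0)
          rw [he1]
          apply pow_le_pow_left₀ (le_min (abs_nonneg _) (le_of_lt hw0))
          apply le_infDist' hne
          intro y hy
          rcases hmem3 y hy with h | h | h <;> rw [h]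
          · refine le_trans (min_le_right _ _) (le_trans (min_le_left _ _) ?_)
            exact le_abs.mpr (Or.inl (by linarith [hx.1]))
          · exact min_le_left _ _
          · refine le_trans (min_le_right _ _) (le_trans (min_le_right _ _) ?_)
            exact le_abs.mpr (Or.inr (by linarith [hx.2]))
      have hkey := key (2/5 - a) (c - 3/5) b (by linarith) (by linarith) (by linarith)
        (by linarith)
      have e1 : (3/10 - (2/5 - a))^2 = (a - 1/10)^2 := by ring
      have e2 : (3/10 - (c - 3/5))^2 = (c - 9/10)^2 := by ring
      constructor
      · rw [hFeq, hAex, hCex]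
        have hk1 := hkey.1
        rw [e1, e2] at hk1
        linarith
      · intro hle
        rw [hFeq, hAex, hCex] at hle
        have hsum : (3/10 - (2/5 - a))^2 + (3/10 - (c - 3/5))^2
            + Nfun b (min (2/5 - a) (c - 3/5)) ≤ 1/300 := by
          rw [e1, e2]
          linarith
        obtain ⟨hu, hv, hbv⟩ := hkey.2 hsum
        have haa : a = 1/10 := by linarith
        have hcc : c = 9/10 := by linarith
        rw [hαeq, haa, hbv, hcc]

  · -- case IV : no point in the middle interval
    have hout : ∀ y ∈ α, y < 2/5 ∨ 3/5 < y := by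
      intro y hy
      have : y ∉ Icc (2/5:ℝ) (3/5) := fun hmem => hMid ⟨y, hy, hmem⟩
      rw [mem_Icc, not_and_or, not_le, not_le] at this
      tauto
    by_cases hIVa : ∀ y ∈ α ∩ Ioo (1/5 : ℝ) (4/5), y < 2/5
    · have hB : 1/75 ≤ 5 * ∫ x in Icc (2/5:ℝ) (3/5), infDist x α ^ 2 := by
        rw [← sqIcc_eval1]
        have := hBmono (fun x => (x - 2/5)^2) (by fun_prop) ?_
        · linarith
        · intro x hx
          rw [mem_Icc] at hx
          apply infDist_sq_ge hne (by linarith [hx.1])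
          intro y hy
          rcases hout y hy with h | h
          · exact le_abs.mpr (Or.inl (by linarith))
          · have hy45 : 4/5 ≤ y := by
              by_contra h45
              push_neg at h45
              exact absurd (hIVa y ⟨hy, by constructor <;> linarith⟩) (by linarith)
            exact le_abs.mpr (Or.inr (by linarith [hx.2]))
      constructor
      · rw [hFeq]; linarith
      · intro hle; exfalso; rw [hFeq] at hle; linarith
    by_cases hIVb : ∀ y ∈ α ∩ Ioo (1/5 : ℝ) (4/5), 3/5 < y
    · have hB : 1/75 ≤ 5 * ∫ x in Icc (2/5:ℝ) (3/5), infDist x α ^ 2 := by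
        rw [← sqIcc_eval2]
        have := hBmono (fun x => (x - 3/5)^2) (by fun_prop) ?_
        · linarith
        · intro x hx
          rw [mem_Icc] at hx
          have h30 : 0 ≤ 3/5 - x := by linarith [hx.2]
          have : (3/5 - x)^2 ≤ infDist x α ^ 2 := by
            apply infDist_sq_ge hne h30
            intro y hy
            rcases hout y hy with h | h
            · have hy15 : y ≤ 1/5 := by
                by_contra h15
                push_neg at h15
                exact absurd (hIVb y ⟨hy, by constructor <;> linarith⟩) (by linarith)
              exact le_abs.mpr (Or.inl (by linarith [hx.1]))
            · exact le_abs.mpr (Or.inr (by linarith))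
          nlinarith [this]
      constructor
      · rw [hFeq]; linarith
      · intro hle; exfalso; rw [hFeq] at hle; linarith
    · -- case IVc : points on both sides flanking the middle
      push_neg at hIVa hIVb
      obtain ⟨p, hpmem, hp25⟩ := hIVa
      obtain ⟨q, hqmem, hq35⟩ := hIVb
      have hpα : p ∈ α := hpmem.1
      have hqα : q ∈ α := hqmem.1
      have hp35 : 3/5 < p := by
        rcases hout p hpα with h | h
        · exact absurd h (by linarith)
        · exact h
      have hp45 : p < 4/5 := hpmem.2.2
      have hq25 : q < 2/5 := by
        rcases hout q hqα with h | h
        · exact h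
        · exact absurd h (by linarith)
      have hq15 : 1/5 < q := hqmem.2.1
      have hB : 1/300 ≤ 5 * ∫ x in Icc (2/5:ℝ) (3/5), infDist x α ^ 2 := by
        rw [← midMinEval]
        have hm := hBmono (fun x => min ((x-2/5)^2) ((x-3/5)^2)) (by fun_prop) ?_
        · linarith
        · intro x hx
          rw [mem_Icc] at hx
          show min ((x-2/5)^2) ((x-3/5)^2) ≤ infDist x α ^ 2
          have he1 : min ((x-2/5)^2) ((x-3/5)^2) = (min (x-2/5) (3/5-x))^2 := by
            have h2 : (x-3/5)^2 = (3/5-x)^2 := by ring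
            rw [h2]
            exact min_sq_eq _ _ (by linarith [hx.1]) (by linarith [hx.2])
          rw [he1]
          apply infDist_sq_ge hne (le_min (by linarith [hx.1]) (by linarith [hx.2]))
          intro y hy
          rcases hout y hy with h | h
          · refine le_trans (min_le_left _ _) ?_
            exact le_abs.mpr (Or.inl (by linarith))
          · refine le_trans (min_le_right _ _) ?_
            exact le_abs.mpr (Or.inr (by linarith))
      by_cases hq2 : ∃ d ∈ α, d < 2/5 ∧ d ≠ q
      · -- two points below 2/5 : the point p is alone on the right
        obtain ⟨d, hdα, hd25, hdq⟩ := hq2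
        have hdist : ∀ y ∈ α, y = d ∨ y = q ∨ y = p := by
          have hsub : ({d, q, p} : Set ℝ) ⊆ α := by
            intro y hy
            rcases hy with rfl | rfl | rfl
            exacts [hdα, hqα, hpα]
          have htriple : ({d, q, p} : Set ℝ).ncard = 3 :=
            Set.ncard_eq_three.mpr ⟨d, q, p, hdq,
              (by intro h; rw [h] at hd25; linarith),
              (by intro h; rw [h] at hq25; linarith), rfl⟩
          have hαeq : α = ({d, q, p} : Set ℝ) := by
            symm
            apply Set.eq_of_subset_of_ncard_le hsub _ hfin
            rw [htriple]; exact hcard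
          intro y hy
          rw [hαeq] at hy
          simpa [mem_insert_iff, mem_singleton_iff] using hy
        have hC : 316/21900 ≤ ∫ x, infDist (S2 x) α ^ 2 ∂P := by
          have hm := hCmono (fun x => (S2 x - p)^2) (by unfold S2; fun_prop) ?_
          · have hmom := momS2 P hP p
            rw [hmom] at hm
            have : (1:ℝ)/100 ≤ (p - 9/10)^2 := by nlinarith
            linarith
          · intro x hx
            rw [mem_Icc] at hx
            show (S2 x - p)^2 ≤ infDist (S2 x) α ^ 2
            apply infDist_sq_ge_abs hne
            intro y hy
            rcases hdist y hy with h | h | h <;> rw [h]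
            · apply abs_le_abs_of_sq
              simp only [S2]
              nlinarith [mul_nonneg (by linarith : (0:ℝ) ≤ p - d)
                (by linarith [hx.1] : (0:ℝ) ≤ 2*(x/5 + 4/5) - d - p)]
            · apply abs_le_abs_of_sq
              simp only [S2]
              nlinarith [mul_nonneg (by linarith : (0:ℝ) ≤ p - q)
                (by linarith [hx.1] : (0:ℝ) ≤ 2*(x/5 + 4/5) - q - p)]
        constructor
        · rw [hFeq]; linarith
        · intro hle; exfalso; rw [hFeq] at hle; linarith
      · -- q is the only point below 2/5
        push_neg at hq2
        have hqonly : ∀ y ∈ α, y = q ∨ 3/5 < y := by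
          intro y hy
          rcases hout y hy with h | h
          · left
            by_contra hne'
            exact hne' (hq2 y hy h)
          · right; exact h
        have hA : 316/21900 ≤ ∫ x, infDist (S1 x) α ^ 2 ∂P := by
          have hm := hAmono (fun x => (S1 x - q)^2) (by unfold S1; fun_prop) ?_
          · have hmom := momS1 P hP q
            rw [hmom] at hm
            have : (1:ℝ)/100 ≤ (q - 1/10)^2 := by nlinarith
            linarith
          · intro x hx
            rw [mem_Icc] at hx
            show (S1 x - q)^2 ≤ infDist (S1 x) α ^ 2
            apply infDist_sq_ge_abs hne
            intro y hy
            rcases hqonly y hy with h | h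
            · rw [h]
            · apply abs_le_abs_of_sq
              simp only [S1]
              nlinarith [mul_nonneg (by linarith : (0:ℝ) ≤ y - q)
                (by linarith [hx.2] : (0:ℝ) ≤ q + y - 2*(x/5))]
        constructor
        · rw [hFeq]; linarith
        · intro hle; exfalso; rw [hFeq] at hle; linarith


theorem optimal_three_means_uniform (P : MeasureTheory.Measure ℝ)
    (hP : IsCondensation P nuUnif) :
    (∀ α : Set ℝ, IsOptimalSet P 3 α → α = {1 / 10, 1 / 2, 9 / 10}) ∧
      quantErr P 3 = 89 / 21900 := by
  have htgt := distortion_target P hP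
  have hncard : ({1/10, 1/2, 9/10} : Set ℝ).ncard = 3 :=
    Set.ncard_eq_three.mpr ⟨1/10, 1/2, 9/10, by norm_num, by norm_num, by norm_num, rfl⟩
  have hmem : (89/21900 : ℝ) ∈ {e : ℝ | ∃ α : Set ℝ, α.Finite ∧ α.Nonempty ∧
      α.ncard ≤ 3 ∧ e = distortion P α} := by
    refine ⟨{1/10, 1/2, 9/10}, Set.toFinite _, ⟨1/10, by norm_num⟩, by rw [hncard], htgt.symm⟩
  have hlb : ∀ e ∈ {e : ℝ | ∃ α : Set ℝ, α.Finite ∧ α.Nonempty ∧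
      α.ncard ≤ 3 ∧ e = distortion P α}, (89/21900 : ℝ) ≤ e := by
    rintro e ⟨α, hfin, hne, hcard, rfl⟩
    exact (main_bound P hP α hfin hne hcard).1
  have hq : quantErr P 3 = 89/21900 := by
    rw [quantErr]
    exact le_antisymm (csInf_le ⟨89/21900, hlb⟩ hmem) (le_csInf ⟨_, hmem⟩ hlb)
  refine ⟨?_, hq⟩
  rintro α ⟨hfin, hne, hcard, hopt⟩
  apply (main_bound P hP α hfin hne hcard).2
  rw [hopt, hq]
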